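/- arXiv:1901.08337 — 3 statements merged into one kernel-verified Lean document; each statement's English description precedes it below -/
import Mathlib

section
/- Let $H \in C^0(\mathbb{R}^2;\mathbb{R})$ and let $u \in W^{1,1}(\mathbb{R}/T\mathbb{Z};\mathbb{R}^2)$ satisfy: $|\dot u|$ is constant a.e., and $u$ is a critical point of the energy $\mathcal{E}_H(u) = \int_0^T |\dot u|\,dt + \int_0^T Q_H(u)\cdot i\dot u\,dt$ (in the sense that $\mathcal{E}_H'(u)[\varphi]=0$ for all periodic test functions $\varphi$), where $Q_H$ is locally Lipschitz with $\mathrm{div}\,Q_H = H$ a.e. Then $u \in C^2(\mathbb{R}/T\mathbb{Z};\mathbb{R}^2)$ and $u$ solves pointwise the equation $\ddot u = \left(\frac{1}{T}\int_0^T |\dot u|\,dt\right) H(u)\, i\dot u$. -/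
open MeasureTheory Real intervalIntegral

/-- Counterclockwise rotation by `π/2` in the plane, i.e. multiplication by `i`. -/
def rot (v : ℝ × ℝ) : ℝ × ℝ := (-v.2, v.1)

/-- Euclidean dot product on `ℝ²`. -/
def dot2 (v w : ℝ × ℝ) : ℝ := v.1 * w.1 + v.2 * w.2

/-- Euclidean norm on `ℝ²`. -/
noncomputable def nrm2 (v : ℝ × ℝ) : ℝ := Real.sqrt (v.1 ^ 2 + v.2 ^ 2)

/-- A `W^{1,1}` loop of period `T` in the plane. -/
structure PLoop (T : ℝ) where
  toFun : ℝ → ℝ × ℝ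
  deriv' : ℝ → ℝ × ℝ
  periodic : Function.Periodic toFun T
  periodic' : Function.Periodic deriv' T
  intIntegrable : IntervalIntegrable deriv' MeasureTheory.volume 0 T
  isIntegralOfDeriv : ∀ t : ℝ, toFun t = toFun 0 + ∫ s in (0:ℝ)..t, deriv' s

/-!
Testing the first variation with `φ = g • e` and using `|u̇| = c` a.e. turns criticality into
the componentwise periodic weak equation `(u̇)' = c H(u) i u̇`. A periodic du Bois-Reymond
lemma, proved by integrating by parts against the absolutely continuous primitive of the
right-hand side, shows that `u̇` agrees a.e. with a continuous primitive `w` of `c H(u) i u̇`.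
Feeding `w` back into the right-hand side makes it continuous, so `w` is `C¹` and `u` is `C²`.
-/

open Set Function

namespace Function.Periodic

variable {E : Type*} [NormedAddCommGroup E] [NormedSpace ℝ E] {T : ℝ}

theorem eq_of_eqOn_Ico {α : Type*} {f g : ℝ → α} (hT : 0 < T) (hf : Periodic f T)
    (hg : Periodic g T) (h : EqOn f g (Ico 0 T)) : f = g := by
  funext x
  rw [← hf.sub_zsmul_eq (toIcoDiv hT 0 x), ← hg.sub_zsmul_eq (toIcoDiv hT 0 x)]
  exact h (toIcoMod_mem_Ico' hT x)

theorem periodic_primitive {f : ℝ → E} (hf : Periodic f T)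
    (hfi : ∀ a b, IntervalIntegrable f volume a b) (h0 : ∫ x in 0..T, f x = 0) :
    Periodic (fun t => ∫ x in 0..t, f x) T := fun t => by
  simpa [h0] using hf.intervalIntegral_add_eq_add 0 t hfi

theorem primitive_eq_of_ae_eq [CompleteSpace E] {f g : ℝ → E} (hT : 0 < T)
    (hf : Periodic f T) (hg : Periodic g T)
    (hfi : ∀ a b, IntervalIntegrable f volume a b)
    (hgi : ∀ a b, IntervalIntegrable g volume a b)
    (h0 : ∫ x in 0..T, f x = 0) (hfg : ∀ᵐ t, t ∈ Ioo 0 T → f t = g t) :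
    (fun t => ∫ x in 0..t, f x) = fun t => ∫ x in 0..t, g x := by
  have hTne : ∀ᵐ t : ℝ, t ≠ T := by simp [ae_iff, measure_singleton]
  have heq : ∀ t ∈ Icc 0 T, ∫ x in 0..t, f x = ∫ x in 0..t, g x := fun t ht =>
    integral_congr_ae <| by
      filter_upwards [hfg, hTne] with x hx hxT hmem
      rw [uIoc_of_le ht.1] at hmem
      exact hx ⟨hmem.1, lt_of_le_of_ne (hmem.2.trans ht.2) hxT⟩
  refine eq_of_eqOn_Ico hT (hf.periodic_primitive hfi h0) (hg.periodic_primitive hgi ?_)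
    fun t ht => heq t (Ico_subset_Icc_self ht)
  rw [← heq T ⟨hT.le, le_rfl⟩, h0]

end Function.Periodic

theorem continuous_of_forall_eq_add_primitive {E : Type*} [NormedAddCommGroup E]
    [NormedSpace ℝ E] {u v : ℝ → E} (hvi : ∀ a b, IntervalIntegrable v volume a b)
    (huv : ∀ t, u t = u 0 + ∫ s in 0..t, v s) : Continuous u := by
  rw [funext huv]
  exact continuous_const.add (continuous_primitive hvi 0)

theorem exists_continuous_periodic_eqOn_Icc {E : Type*} [TopologicalSpace E] {T : ℝ}
    (hT : 0 < T) {ψ : ℝ → E} (hψ : Continuous ψ) (hψT : ψ 0 = ψ T) :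
    ∃ Ψ : ℝ → E, Continuous Ψ ∧ Periodic Ψ T ∧ EqOn Ψ ψ (Icc 0 T) := by
  have : Fact (0 < T) := ⟨hT⟩
  refine ⟨fun t => AddCircle.liftIco T 0 ψ t,
    (AddCircle.liftIco_continuous (by simpa using hψT) (by simpa using hψ.continuousOn)).comp
      (AddCircle.continuous_mk' T),
    fun t => by simp, fun t ht => ?_⟩
  rcases ht.2.lt_or_eq with hlt | rfl
  · exact AddCircle.liftIco_coe_apply (by simpa using ⟨ht.1, hlt⟩)
  · simpa [AddCircle.coe_period, ← hψT] using
      AddCircle.liftIco_coe_apply (p := t) (a := 0) (f := ψ) (x := 0) (by simpa using hT)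

def HasPeriodicWeakDeriv (T : ℝ) (f α : ℝ → ℝ) : Prop :=
  ∀ g : ℝ → ℝ, ContDiff ℝ 1 g → Periodic g T →
    ∫ t in 0..T, (deriv g t * f t + g t * α t) = 0

namespace HasPeriodicWeakDeriv

variable {T : ℝ} {f α : ℝ → ℝ}

theorem integral_eq_zero (h : HasPeriodicWeakDeriv T f α) : ∫ t in 0..T, α t = 0 := by
  simpa using h (fun _ => 1) contDiff_const fun _ => rfl

theorem integral_mul_sub_mean_eq_zero (hT : 0 < T) (hf : IntervalIntegrable f volume 0 T)
    (h : HasPeriodicWeakDeriv T f 0) {ψ : ℝ → ℝ} (hψ : Continuous ψ) (hψT : ψ 0 = ψ T) :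
    ∫ t in 0..T, ψ t * (f t - T⁻¹ * ∫ s in 0..T, f s) = 0 := by
  obtain ⟨Ψ, hΨc, hΨp, hΨψ⟩ := exists_continuous_periodic_eqOn_Icc hT hψ hψT
  rw [← uIcc_of_le hT.le] at hΨψ
  -- subtracting its mean makes the periodic primitive of `ψ` an admissible test function
  set m := T⁻¹ * ∫ t in 0..T, ψ t
  have hΨm : Continuous fun t => Ψ t - m := hΨc.sub continuous_const
  set g := fun t => ∫ x in 0..t, (Ψ x - m)
  have hgd : ∀ t, HasDerivAt g (Ψ t - m) t := fun t =>
    (hΨm.integral_hasStrictDerivAt 0 t).hasDerivAt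
  have hg : ContDiff ℝ 1 g := contDiff_one_iff_deriv.mpr
    ⟨fun t => (hgd t).differentiableAt, by simpa [funext fun t => (hgd t).deriv] using hΨm⟩
  have hgp : Periodic g T := by
    refine Periodic.periodic_primitive (fun t => by simp only [hΨp t])
      (fun a b => hΨm.intervalIntegrable a b) ?_
    rw [integral_sub (hΨc.intervalIntegrable 0 T) intervalIntegrable_const,
      intervalIntegral.integral_const, integral_congr hΨψ]
    simp [m, hT.ne']
  have hψm : ∫ t in 0..T, (ψ t - m) * f t = 0 := by
    refine (integral_congr fun t ht => ?_).trans (h g hg hgp)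
    simp only [(hgd t).deriv, hΨψ ht, Pi.zero_apply, mul_zero, add_zero]
  have hψmf : IntervalIntegrable (fun t => (ψ t - m) * f t) volume 0 T :=
    hf.continuousOn_mul (hψ.sub continuous_const).continuousOn
  calc ∫ t in 0..T, ψ t * (f t - T⁻¹ * ∫ s in 0..T, f s)
      = ∫ t in 0..T, ((ψ t - m) * f t + m * f t - (T⁻¹ * ∫ s in 0..T, f s) * ψ t) :=
        integral_congr fun t _ => by ring
    _ = (∫ t in 0..T, (ψ t - m) * f t) + m * (∫ t in 0..T, f t)
          - (T⁻¹ * ∫ s in 0..T, f s) * ∫ t in 0..T, ψ t := by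
        rw [intervalIntegral.integral_sub (hψmf.add (hf.const_mul m))
            ((hψ.intervalIntegrable 0 T).const_mul _), intervalIntegral.integral_add hψmf
            (hf.const_mul m), intervalIntegral.integral_const_mul,
          intervalIntegral.integral_const_mul]
    _ = 0 := by rw [hψm]; ring

theorem exists_ae_eq_const_of_zero (hT : 0 < T) (hf : IntervalIntegrable f volume 0 T)
    (h : HasPeriodicWeakDeriv T f 0) : ∃ k, ∀ᵐ t, t ∈ Ioo 0 T → f t = k := by
  set k := T⁻¹ * ∫ t in 0..T, f t
  refine ⟨k, ?_⟩
  have hloc : LocallyIntegrableOn (fun t => f t - k) (Ioo 0 T) :=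
    ((intervalIntegrable_iff_integrableOn_Ioo_of_le hT.le).mp
      (hf.sub intervalIntegrable_const)).locallyIntegrableOn
  suffices hae : ∀ᵐ t, t ∈ Ioo 0 T → f t - k = 0 by
    filter_upwards [hae] with t ht hmem using sub_eq_zero.mp (ht hmem)
  refine isOpen_Ioo.ae_eq_zero_of_integral_contDiff_smul_eq_zero hloc fun ψ hψ _ hψs => ?_
  have hψ0 : ∀ x ∉ Ioo 0 T, ψ x = 0 := fun x hx =>
    image_eq_zero_of_notMem_tsupport fun h => hx (hψs h)
  have hψk := h.integral_mul_sub_mean_eq_zero hT hf hψ.continuous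
    (by rw [hψ0 0 (by simp), hψ0 T (by simp)])
  rwa [intervalIntegral.integral_of_le hT.le, setIntegral_eq_integral_of_forall_compl_eq_zero
    fun x hx => by simp [hψ0 x fun h => hx (Ioo_subset_Ioc_self h)]] at hψk

end HasPeriodicWeakDeriv

theorem integral_mul_eq_neg_integral_deriv_mul_primitive {T : ℝ} {α g : ℝ → ℝ}
    (hα : IntervalIntegrable α volume 0 T) (hα0 : ∫ t in 0..T, α t = 0)
    (hg : ContDiff ℝ 1 g) :
    ∫ t in 0..T, g t * α t = -∫ t in 0..T, deriv g t * ∫ s in 0..t, α s := by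
  have h0 : (0 : ℝ) ∈ uIcc 0 T := left_mem_uIcc
  have hA := hα.absolutelyContinuousOnInterval_intervalIntegral h0
  have hparts := hg.contDiffOn.absolutelyContinuousOnInterval.integral_mul_deriv_eq_deriv_mul hA
  simp only [integral_same, hα0, mul_zero, sub_zero, zero_sub] at hparts
  rw [← hparts]
  refine integral_congr_ae ?_
  filter_upwards [hα.ae_hasDerivAt_integral] with t ht hmem
  rw [(ht (uIoc_subset_uIcc hmem) 0 h0).deriv]

namespace HasPeriodicWeakDeriv

variable {T : ℝ} {f α : ℝ → ℝ}

theorem exists_ae_eq_add_primitive (hT : 0 < T) (hf : IntervalIntegrable f volume 0 T)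
    (hα : IntervalIntegrable α volume 0 T) (h : HasPeriodicWeakDeriv T f α) :
    ∃ k, ∀ᵐ t, t ∈ Ioo 0 T → f t = k + ∫ s in 0..t, α s := by
  set A := fun t => ∫ s in 0..t, α s
  have hAi : IntervalIntegrable A volume 0 T :=
    (hα.absolutelyContinuousOnInterval_intervalIntegral left_mem_uIcc).continuousOn
      |>.intervalIntegrable
  suffices hfA : HasPeriodicWeakDeriv T (fun t => f t - A t) 0 by
    obtain ⟨k, hk⟩ := exists_ae_eq_const_of_zero hT (hf.sub hAi) hfA
    exact ⟨k, by filter_upwards [hk] with t ht hmem using by linarith [ht hmem]⟩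
  intro g hg hgp
  have hg' : Continuous (deriv g) := hg.continuous_deriv le_rfl
  have hparts := integral_mul_eq_neg_integral_deriv_mul_primitive hα h.integral_eq_zero hg
  have hweak := h g hg hgp
  rw [intervalIntegral.integral_add (hf.continuousOn_mul hg'.continuousOn)
    (hα.continuousOn_mul hg.continuous.continuousOn), hparts] at hweak
  simp only [Pi.zero_apply, mul_zero, add_zero, mul_sub]
  rw [intervalIntegral.integral_sub (hf.continuousOn_mul hg'.continuousOn)
    (hAi.continuousOn_mul hg'.continuousOn)]
  linarith

end HasPeriodicWeakDeriv

theorem contDiff_two_of_ae_eq_primitive {E : Type*} [NormedAddCommGroup E] [NormedSpace ℝ E]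
    [CompleteSpace E] {T : ℝ} (hT : 0 < T) {u v : ℝ → E} {F : E → E → E}
    (hF : Continuous (uncurry F)) (hu : Periodic u T) (hv : Periodic v T)
    (hvi : IntervalIntegrable v volume 0 T) (huv : ∀ t, u t = u 0 + ∫ s in 0..t, v s)
    (hFi : IntervalIntegrable (fun s => F (u s) (v s)) volume 0 T)
    (hF0 : ∫ s in 0..T, F (u s) (v s) = 0) {k : E}
    (hk : ∀ᵐ t, t ∈ Ioo 0 T → v t = k + ∫ s in 0..t, F (u s) (v s)) :
    ContDiff ℝ 2 u ∧ ∀ t, deriv (deriv u) t = F (u t) (deriv u t) := by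
  have hvi' := hv.intervalIntegrable₀ hT.ne' hvi
  set α := fun s => F (u s) (v s)
  have hαp : Periodic α T := fun t => by simp only [α, hu t, hv t]
  have hαi' := hαp.intervalIntegrable₀ hT.ne' hFi
  have hu_cont := continuous_of_forall_eq_add_primitive hvi' huv
  -- `w` is the continuous representative of `v`
  set w := fun t => k + ∫ s in 0..t, α s
  have hw_cont : Continuous w := continuous_const.add (continuous_primitive hαi' 0)
  have hwp : Periodic w T := fun t => by simp only [w, hαp.periodic_primitive hαi' hF0 t]
  have hv0 : ∫ s in 0..T, v s = 0 := by simpa [hu.eq] using huv T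
  have hu' : ∀ t, HasDerivAt u (w t) t := by
    have hu_eq : u = fun t => u 0 + ∫ s in 0..t, w s := funext fun t => by
      rw [huv t,
        congrFun (hv.primitive_eq_of_ae_eq hT hwp hvi' hw_cont.intervalIntegrable hv0 hk)]
    rw [hu_eq]
    exact fun t => ((hw_cont.integral_hasStrictDerivAt 0 t).hasDerivAt).const_add _
  set β := fun s => F (u s) (w s)
  have hβ_cont : Continuous β := hF.comp (hu_cont.prodMk hw_cont)
  have hw' : ∀ t, HasDerivAt w (β t) t := by
    have hαβ : ∀ᵐ t, t ∈ Ioo 0 T → α t = β t := by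
      filter_upwards [hk] with t ht hmem
      simp only [α, β, w, ht hmem]
    have hβp : Periodic β T := fun t => by simp only [β, hu t, hwp t]
    have hw_eq : w = fun t => k + ∫ s in 0..t, β s := funext fun t => by
      simp only [w,
        congrFun (hαp.primitive_eq_of_ae_eq hT hβp hαi' hβ_cont.intervalIntegrable hF0 hαβ)]
    rw [hw_eq]
    exact fun t => ((hβ_cont.integral_hasStrictDerivAt 0 t).hasDerivAt).const_add _
  have hderiv : deriv u = w := funext fun t => (hu' t).deriv
  refine ⟨?_, fun t => by rw [hderiv, (hw' t).deriv]⟩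
  rw [show (2 : WithTop ℕ∞) = 1 + 1 by norm_num, contDiff_succ_iff_deriv, hderiv]
  refine ⟨fun t => (hu' t).differentiableAt, by simp, contDiff_one_iff_deriv.mpr ?_⟩
  exact ⟨fun t => (hw' t).differentiableAt, by rwa [funext fun t => (hw' t).deriv]⟩

theorem exists_ae_eq_add_primitive_prod {T : ℝ} (hT : 0 < T) {f α : ℝ → ℝ × ℝ}
    (hf : IntervalIntegrable f volume 0 T) (hα : IntervalIntegrable α volume 0 T)
    (h₁ : HasPeriodicWeakDeriv T (fun t => (f t).1) (fun t => (α t).1))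
    (h₂ : HasPeriodicWeakDeriv T (fun t => (f t).2) (fun t => (α t).2)) :
    ∫ t in 0..T, α t = 0 ∧ ∃ k, ∀ᵐ t, t ∈ Ioo 0 T → f t = k + ∫ s in 0..t, α s := by
  have hfst {a b : ℝ} (hα : IntervalIntegrable α volume a b) :
      (∫ t in a..b, α t).1 = ∫ t in a..b, (α t).1 :=
    ((ContinuousLinearMap.fst ℝ ℝ ℝ).intervalIntegral_comp_comm hα).symm
  have hsnd {a b : ℝ} (hα : IntervalIntegrable α volume a b) :
      (∫ t in a..b, α t).2 = ∫ t in a..b, (α t).2 :=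
    ((ContinuousLinearMap.snd ℝ ℝ ℝ).intervalIntegral_comp_comm hα).symm
  obtain ⟨k₁, hk₁⟩ :=
    h₁.exists_ae_eq_add_primitive hT ⟨hf.1.fst, hf.2.fst⟩ ⟨hα.1.fst, hα.2.fst⟩
  obtain ⟨k₂, hk₂⟩ :=
    h₂.exists_ae_eq_add_primitive hT ⟨hf.1.snd, hf.2.snd⟩ ⟨hα.1.snd, hα.2.snd⟩
  refine ⟨Prod.ext ?_ ?_, (k₁, k₂), ?_⟩
  · simpa [hfst hα] using h₁.integral_eq_zero
  · simpa [hsnd hα] using h₂.integral_eq_zero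
  filter_upwards [hk₁, hk₂] with t ht₁ ht₂ hmem
  have hαt : IntervalIntegrable α volume 0 t :=
    hα.mono_set (uIcc_subset_uIcc left_mem_uIcc (by
      rw [uIcc_of_le hT.le]; exact Ioo_subset_Icc_self hmem))
  exact Prod.ext (by simp [ht₁ hmem, hfst hαt]) (by simp [ht₂ hmem, hsnd hαt])

theorem continuous_rot : Continuous rot := by
  unfold rot; fun_prop

theorem IntervalIntegrable.rot {f : ℝ → ℝ × ℝ} {a b : ℝ}
    (hf : IntervalIntegrable f volume a b) : IntervalIntegrable (fun t => rot (f t)) volume a b :=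
  ⟨hf.1.snd.neg.prodMk hf.1.fst, hf.2.snd.neg.prodMk hf.2.fst⟩

-- Also true at `x = 0` since `a / 0 = 0`: the weak equation can be multiplied by `|u̇|` with no
-- case split on `|u̇| = 0`.
theorem dot2_eq_nrm2_mul_div (x y : ℝ × ℝ) : dot2 x y = nrm2 x * (dot2 x y / nrm2 x) := by
  rcases eq_or_ne (nrm2 x) 0 with h | h
  · have hx := Real.sqrt_eq_zero'.mp h
    have h₁ : x.1 = 0 := by nlinarith [sq_nonneg x.1, sq_nonneg x.2]
    have h₂ : x.2 = 0 := by nlinarith [sq_nonneg x.1, sq_nonneg x.2]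
    simp [dot2, h, h₁, h₂]
  · field_simp

theorem hasPeriodicWeakDeriv_of_critical {T c : ℝ} {H : ℝ × ℝ → ℝ} {x v : ℝ → ℝ × ℝ}
    (hc : ∀ᵐ t, nrm2 (v t) = c)
    (hcrit : ∀ φ : ℝ → ℝ × ℝ, ContDiff ℝ 1 φ → Periodic φ T →
      ∫ t in 0..T, (dot2 (v t) (deriv φ t) / nrm2 (v t) + H (x t) * dot2 (φ t) (rot (v t))) = 0)
    (e : ℝ × ℝ) :
    HasPeriodicWeakDeriv T (fun t => dot2 (v t) e)
      fun t => dot2 e ((c * H (x t)) • rot (v t)) := by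
  intro g hg hgp
  have hφ := congrArg (c * ·)
    (hcrit (fun t => g t • e) (hg.smul contDiff_const) fun t => by simp [hgp t])
  simp only [mul_zero, ← intervalIntegral.integral_const_mul] at hφ
  refine Eq.trans (integral_congr_ae ?_) hφ
  filter_upwards [hc] with t ht _
  rw [deriv_smul_const (hg.differentiable one_ne_zero t), ← ht]
  have key := dot2_eq_nrm2_mul_div (v t) e
  simp only [dot2, Prod.smul_fst, Prod.smul_snd, smul_eq_mul] at key ⊢
  linear_combination deriv g t * key

theorem critical_point_regularity_general (T : ℝ) (hT : 0 < T)
    (H : ℝ × ℝ → ℝ) (hH : Continuous H)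
    (u : PLoop T)
    (hconst : ∃ c : ℝ, ∀ᵐ t : ℝ, nrm2 (u.deriv' t) = c)
    (hcrit : ∀ φ : ℝ → ℝ × ℝ, ContDiff ℝ 1 φ → Function.Periodic φ T →
      (∫ t in (0:ℝ)..T, (dot2 (u.deriv' t) (deriv φ t) / nrm2 (u.deriv' t)
        + H (u.toFun t) * dot2 (φ t) (rot (u.deriv' t)))) = 0) :
    ContDiff ℝ 2 u.toFun ∧
      ∀ t : ℝ, deriv (deriv u.toFun) t
        = ((T⁻¹ * ∫ s in (0:ℝ)..T, nrm2 (u.deriv' s)) * H (u.toFun t))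
            • rot (deriv u.toFun t) := by
  obtain ⟨c, hc⟩ := hconst
  have hmean : T⁻¹ * ∫ s in 0..T, nrm2 (u.deriv' s) = c := by
    rw [integral_congr_ae (hc.mono fun t ht _ => ht), intervalIntegral.integral_const,
      smul_eq_mul, sub_zero, ← mul_assoc, inv_mul_cancel₀ hT.ne', one_mul]
  have hu_cont := continuous_of_forall_eq_add_primitive
    (u.periodic'.intervalIntegrable₀ hT.ne' u.intIntegrable) u.isIntegralOfDeriv
  set F : ℝ × ℝ → ℝ × ℝ → ℝ × ℝ := fun x y => (c * H x) • rot y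
  have hF : Continuous (uncurry F) :=
    (continuous_const.mul (hH.comp continuous_fst)).smul (continuous_rot.comp continuous_snd)
  have hFi : IntervalIntegrable (fun s => F (u.toFun s) (u.deriv' s)) volume 0 T :=
    u.intIntegrable.rot.continuousOn_smul (continuous_const.mul (hH.comp hu_cont)).continuousOn
  have hweak := hasPeriodicWeakDeriv_of_critical hc hcrit
  obtain ⟨hF0, k, hk⟩ := exists_ae_eq_add_primitive_prod hT u.intIntegrable hFi
    (by simpa [dot2, F] using hweak (1, 0)) (by simpa [dot2, F] using hweak (0, 1))
  rw [hmean]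
  exact contDiff_two_of_ae_eq_primitive hT hF u.periodic u.periodic' u.intIntegrable
    u.isIntegralOfDeriv hFi hF0 hk

/-- Regularity of critical points: if `u ∈ W^{1,1}(ℝ/Tℤ;ℝ²)` has `|u̇|` constant a.e.
and is a critical point of `𝓔_H(u) = ∫₀ᵀ |u̇| + ∫₀ᵀ Q_H(u)⬝iu̇` (the first variation
`∫₀ᵀ (u̇/|u̇|)⬝φ̇ + H(u) φ⬝iu̇ dt` vanishes for every periodic test function `φ`),
where `Q_H` is locally Lipschitz with `div Q_H = H` a.e., then `u ∈ C²` and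
`ü = (T⁻¹∫₀ᵀ|u̇|) H(u) i u̇` pointwise. -/
theorem critical_point_regularity (T : ℝ) (hT : 0 < T)
    (H : ℝ × ℝ → ℝ) (hH : Continuous H)
    (Q : ℝ × ℝ → ℝ × ℝ) (hQ : LocallyLipschitz Q)
    (Q' : ℝ × ℝ → ℝ × ℝ →L[ℝ] ℝ × ℝ)
    (hdiv : ∀ᵐ p : ℝ × ℝ, HasFDerivAt Q (Q' p) p ∧
      (Q' p (1, 0)).1 + (Q' p (0, 1)).2 = H p)
    (u : PLoop T)
    (hconst : ∃ c : ℝ, ∀ᵐ t : ℝ, nrm2 (u.deriv' t) = c)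
    (hcrit : ∀ φ : ℝ → ℝ × ℝ, ContDiff ℝ 1 φ → Function.Periodic φ T →
      (∫ t in (0:ℝ)..T, (dot2 (u.deriv' t) (deriv φ t) / nrm2 (u.deriv' t)
        + H (u.toFun t) * dot2 (φ t) (rot (u.deriv' t)))) = 0) :
    ContDiff ℝ 2 u.toFun ∧
      ∀ t : ℝ, deriv (deriv u.toFun) t
        = ((T⁻¹ * ∫ s in (0:ℝ)..T, nrm2 (u.deriv' s)) * H (u.toFun t))
            • rot (deriv u.toFun t) :=
  critical_point_regularity_general T hT H hH u hconst hcrit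
end

section
/- Let $Q:\mathbb{R}^2\times\mathbb{R}^2 \to \mathbb{R}$ be continuous with $Q(p,q) \le m_2 |q|^2$ and $Q(p,\lambda q) = \lambda^2 Q(p,q)$ for all $\lambda > 0$. Let $\mathcal{C} \subset H^1(\mathbb{R}/\mathbb{Z};\mathbb{R}^2)$ be a class invariant under admissible parameter variations. If $u \in \mathcal{C}$ minimizes $\mathcal{Q}(u) = \int_0^1 Q(u,\dot u)\,dt$ over $\mathcal{C}$, then there exists $h \in \mathbb{R}$ such that $Q(u(t),\dot u(t)) = h$ for almost every $t \in [0,1]$. -/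
/-! Write `Q(u, u̇) = ρ² - C` on `[0, 1]` with `ρ ≥ 1` continuous and `C ≥ 0`, and let `φ` be the
reparametrization of `[0, 1]` solving `φ' = c / ρ(φ)`, `c = ∫₀¹ ρ`. The admissible family
`t + sin² ε · (φ t - t)` reaches `φ` at `ε = π/2`, so `u ∘ φ ∈ 𝒞`, and by 2-homogeneity and
substitution `𝒬(u ∘ φ) = ∫₀¹ (c / ρ)(ρ² - C)`. By AM-GM this is at most `c² - C`, whereas
`𝒬(u) = ∫₀¹ ρ² - C`. Minimality therefore gives `∫₀¹ ρ² ≤ (∫₀¹ ρ)²`, which forces `ρ ≡ c`. -/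

open MeasureTheory Real intervalIntegral

/-- An admissible parameter variation: a family `ξ(ε,·) : [0,1] → [0,1]`,
`ε ∈ (-ε₀, ε₀)`, of `C¹` diffeomorphisms fixing the endpoints, with `ξ(0,t) = t`
and `∂_ε ξ(·,ε) ∈ C¹`. -/
def IsAdmissibleVariation (ε₀ : ℝ) (ξ : ℝ → ℝ → ℝ) : Prop :=
  0 < ε₀ ∧
  (∀ ε ∈ Set.Ioo (-ε₀) ε₀,
      ContDiff ℝ 1 (ξ ε) ∧ Set.BijOn (ξ ε) (Set.Icc 0 1) (Set.Icc 0 1) ∧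
      ∀ t ∈ Set.Icc (0:ℝ) 1, 0 < deriv (ξ ε) t) ∧
  (∀ ε ∈ Set.Ioo (-ε₀) ε₀, ξ ε 0 = 0 ∧ ξ ε 1 = 1) ∧
  (∀ t : ℝ, ξ 0 t = t) ∧
  (∀ ε ∈ Set.Ioo (-ε₀) ε₀, ContDiff ℝ 1 fun t => deriv (fun e => ξ e t) ε)

/-- The variational integral `𝒬(u) = ∫₀¹ Q(u, u̇) dt`. -/
noncomputable def varQ (Q : ℝ × ℝ → ℝ × ℝ → ℝ) (u : ℝ → ℝ × ℝ) : ℝ :=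
  ∫ t in (0:ℝ)..1, Q (u t) (deriv u t)

open Set Filter

lemma exists_continuous_one_le_sq_sub_eq {f : ℝ → ℝ} {a b : ℝ} (hab : a ≤ b)
    (hf : ContinuousOn f (Icc a b)) :
    ∃ C, 0 ≤ C ∧ ∃ ρ : ℝ → ℝ, Continuous ρ ∧ (∀ t, 1 ≤ ρ t) ∧ ∀ t ∈ Icc a b, f t = ρ t ^ 2 - C := by
  obtain ⟨m, hm⟩ := (isCompact_Icc.image_of_continuousOn hf).bddBelow
  have hg1 : ∀ t, 1 ≤ f (projIcc a b hab t) + (|m| + 1) := fun t => by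
    linarith [hm ⟨_, (projIcc a b hab t).2, rfl⟩, neg_abs_le m]
  refine ⟨|m| + 1, by positivity, fun t => √(f (projIcc a b hab t) + (|m| + 1)), ?_,
    fun t => one_le_sqrt.2 (hg1 t), fun t ht => ?_⟩
  · exact ((hf.comp_continuous (continuous_subtype_val.comp continuous_projIcc)
      fun t => (projIcc a b hab t).2).add continuous_const).sqrt
  · rw [sq_sqrt (zero_le_one.trans (hg1 t)), projIcc_of_mem hab ht]
    ring

section Reparametrization

variable {ρ : ℝ → ℝ}

lemma exists_leftInverse_integral_hasDerivAt_inv (hρ : Continuous ρ) {δ : ℝ} (hδ : 0 < δ)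
    (hρδ : ∀ x, δ ≤ ρ x) :
    ∃ φ : ℝ → ℝ, (∀ y, HasDerivAt φ (ρ (φ y))⁻¹ y) ∧ ∀ s, φ (∫ x in (0:ℝ)..s, ρ x) = s := by
  set ψ : ℝ → ℝ := fun s => ∫ x in (0:ℝ)..s, ρ x
  have hψ : ∀ s, HasDerivAt ψ (ρ s) s := fun s => (hρ.integral_hasStrictDerivAt 0 s).hasDerivAt
  have hψc : Continuous ψ := continuous_iff_continuousAt.2 fun s => (hψ s).continuousAt
  have hψmono : StrictMono ψ :=
    strictMono_of_deriv_pos fun s => (hψ s).deriv ▸ hδ.trans_le (hρδ s)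
  have hgap : Monotone fun s => ψ s - δ * s := by
    have hd : ∀ s, HasDerivAt (fun s => ψ s - δ * s) (ρ s - δ) s := fun s =>
      ((hψ s).sub ((hasDerivAt_id' s).const_mul δ)).congr_deriv (by ring)
    exact monotone_of_deriv_nonneg (fun s => (hd s).differentiableAt)
      fun s => (hd s).deriv ▸ sub_nonneg.2 (hρδ s)
  have hψ0 : ψ 0 = 0 := integral_same
  have htop : Tendsto ψ atTop atTop :=
    tendsto_atTop_mono' _ ((eventually_ge_atTop 0).mono fun s hs => by simpa [hψ0] using hgap hs)
      (tendsto_id.const_mul_atTop hδ)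
  have hbot : Tendsto ψ atBot atBot :=
    tendsto_atBot_mono' _ ((eventually_le_atBot 0).mono fun s hs => by simpa [hψ0] using hgap hs)
      (tendsto_id.const_mul_atBot hδ)
  set Φ := hψmono.orderIsoOfSurjective ψ (hψc.surjective htop hbot)
  refine ⟨Φ.symm, fun y => ?_, Φ.symm_apply_apply⟩
  exact HasDerivAt.of_local_left_inverse Φ.symm.continuous.continuousAt (hψ (Φ.symm y))
    (hδ.trans_le (hρδ _)).ne' (Eventually.of_forall Φ.apply_symm_apply)

lemma exists_hasDerivAt_integral_div_comp (hρ : Continuous ρ) {δ : ℝ} (hδ : 0 < δ)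
    (hρδ : ∀ x, δ ≤ ρ x) :
    ∃ φ : ℝ → ℝ, (∀ y, HasDerivAt φ ((∫ x in (0:ℝ)..1, ρ x) / ρ (φ y)) y) ∧ φ 0 = 0 ∧ φ 1 = 1 := by
  obtain ⟨φ, hφ, hφψ⟩ := exists_leftInverse_integral_hasDerivAt_inv hρ hδ hρδ
  set c := ∫ x in (0:ℝ)..1, ρ x
  refine ⟨fun y => φ (c * y), fun y => ?_, ?_, ?_⟩
  · exact ((hφ (c * y)).comp y ((hasDerivAt_id' y).const_mul c)).congr_deriv (by ring)
  · simpa using hφψ 0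
  · simpa using hφψ 1

end Reparametrization

lemma StrictMonoOn.bijOn_Icc {α β : Type*} [ConditionallyCompleteLinearOrder α]
    [TopologicalSpace α] [OrderTopology α] [DenselyOrdered α] [LinearOrder β] [TopologicalSpace β]
    [OrderClosedTopology β] {f : α → β} {a b : α} (hab : a ≤ b) (hf : ContinuousOn f (Icc a b))
    (hmono : StrictMonoOn f (Icc a b)) : BijOn f (Icc a b) (Icc (f a) (f b)) :=
  ⟨hmono.monotoneOn.mapsTo_Icc, hmono.injOn,
    hf.surjOn_Icc (left_mem_Icc.2 hab) (right_mem_Icc.2 hab)⟩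

lemma isAdmissibleVariation_lineHomotopy {φ : ℝ → ℝ} (hφ : ContDiff ℝ 1 φ)
    (hφ' : ∀ t ∈ Icc (0:ℝ) 1, 0 < deriv φ t) (hφ0 : φ 0 = 0) (hφ1 : φ 1 = 1)
    {ε₀ : ℝ} (hε₀ : 0 < ε₀) {β : ℝ → ℝ} (hβ : Differentiable ℝ β) (hβ0 : β 0 = 0)
    (hβ01 : ∀ ε ∈ Ioo (-ε₀) ε₀, β ε ∈ Icc 0 1) :
    IsAdmissibleVariation ε₀ fun ε t => t + β ε * (φ t - t) := by
  have hφd : Differentiable ℝ φ := hφ.differentiable one_ne_zero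
  have hξ : ∀ ε, ContDiff ℝ 1 fun t => t + β ε * (φ t - t) := fun ε =>
    contDiff_id.add (contDiff_const.mul (hφ.sub contDiff_id))
  have hξ' : ∀ ε t, HasDerivAt (fun t => t + β ε * (φ t - t)) ((1 - β ε) + β ε * deriv φ t) t :=
    fun ε t => ((hasDerivAt_id' t).add (((hφd t).hasDerivAt.sub (hasDerivAt_id' t)).const_mul
      (β ε))).congr_deriv (by ring)
  -- a convex combination of `1` and `φ' > 0`
  have hξ'pos : ∀ ε ∈ Ioo (-ε₀) ε₀, ∀ t ∈ Icc (0:ℝ) 1, 0 < (1 - β ε) + β ε * deriv φ t := by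
    intro ε hε t ht
    obtain ⟨h0, h1⟩ := hβ01 ε hε
    rcases h1.lt_or_eq with h1 | h1
    · have := mul_nonneg h0 (hφ' t ht).le
      linarith
    · simpa [h1] using hφ' t ht
  refine ⟨hε₀, fun ε hε => ⟨hξ ε, ?_, fun t ht => (hξ' ε t).deriv ▸ hξ'pos ε hε t ht⟩,
    fun ε _ => by simp [hφ0, hφ1], fun t => by simp [hβ0], fun ε _ => ?_⟩
  · have hmono : StrictMonoOn (fun t => t + β ε * (φ t - t)) (Icc 0 1) :=
      strictMonoOn_of_deriv_pos (convex_Icc 0 1) (hξ ε).continuous.continuousOn fun t ht =>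
        (hξ' ε t).deriv ▸ hξ'pos ε hε t (interior_subset ht)
    simpa [hφ0, hφ1] using hmono.bijOn_Icc zero_le_one (hξ ε).continuous.continuousOn
  · have : (fun t => deriv (fun e => t + β e * (φ t - t)) ε) = fun t => deriv β ε * (φ t - t) :=
      funext fun t => ((hβ ε).hasDerivAt.mul_const (φ t - t)).const_add t |>.deriv
    rw [this]
    exact contDiff_const.mul (hφ.sub contDiff_id)

lemma comp_mem_of_forall_isAdmissibleVariation {α : Type*} {𝒞 : Set (ℝ → α)}
    (h𝒞inv : ∀ v ∈ 𝒞, ∀ (ε₀ : ℝ) (ξ : ℝ → ℝ → ℝ), IsAdmissibleVariation ε₀ ξ →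
      ∀ ε ∈ Set.Ioo (-ε₀) ε₀, (fun t => v (ξ ε t)) ∈ 𝒞)
    {v : ℝ → α} (hv : v ∈ 𝒞) {φ : ℝ → ℝ} (hφ : ContDiff ℝ 1 φ)
    (hφ' : ∀ t ∈ Icc (0:ℝ) 1, 0 < deriv φ t) (hφ0 : φ 0 = 0) (hφ1 : φ 1 = 1) :
    (fun t => v (φ t)) ∈ 𝒞 := by
  have hβ01 : ∀ ε ∈ Ioo (-π) π, sin ε ^ 2 ∈ Icc 0 1 := fun ε _ =>
    ⟨sq_nonneg _, sin_sq_le_one ε⟩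
  have hvar := isAdmissibleVariation_lineHomotopy hφ hφ' hφ0 hφ1 pi_pos
    (differentiable_sin.pow 2) (by simp) hβ01
  simpa using h𝒞inv v hv π _ hvar (π / 2) ⟨by linarith [pi_pos], by linarith [pi_pos]⟩

lemma varQ_comp_of_hasDerivAt {Q : ℝ × ℝ → ℝ × ℝ → ℝ}
    (hQcont : Continuous fun pq : (ℝ × ℝ) × (ℝ × ℝ) => Q pq.1 pq.2)
    (hQhom : ∀ (p q : ℝ × ℝ) (l : ℝ), 0 < l → Q p (l • q) = l ^ 2 * Q p q)
    {u : ℝ → ℝ × ℝ} (hu : ContDiff ℝ 1 u) {φ w : ℝ → ℝ} (hw : Continuous w)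
    (hwpos : ∀ s, 0 < w s) (hφ : ∀ y, HasDerivAt φ (w (φ y)) y) :
    varQ Q (fun y => u (φ y)) = ∫ s in φ 0..φ 1, w s * Q (u s) (deriv u s) := by
  have hφc : Continuous φ := continuous_iff_continuousAt.2 fun y => (hφ y).continuousAt
  have huφ : ∀ y, HasDerivAt (fun y => u (φ y)) (w (φ y) • deriv u (φ y)) y := fun y =>
    ((hu.differentiable one_ne_zero (φ y)).hasDerivAt).scomp y (hφ y)
  have hf : Continuous fun s => w s * Q (u s) (deriv u s) :=
    hw.mul (hQcont.comp (hu.continuous.prodMk (hu.continuous_deriv le_rfl)))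
  rw [← integral_deriv_smul_comp (fun y _ => hφ y) (hw.comp hφc).continuousOn hf, varQ]
  refine integral_congr fun y _ => ?_
  simp only [(huφ y).deriv, hQhom _ _ _ (hwpos _), Function.comp, smul_eq_mul]
  ring

section UnitIntervalAverage

variable {ρ : ℝ → ℝ}

lemma eq_integral_of_integral_sq_le (hρ : Continuous ρ)
    (h : ∫ t in (0:ℝ)..1, ρ t ^ 2 ≤ (∫ t in (0:ℝ)..1, ρ t) ^ 2) :
    ∀ t ∈ Icc (0:ℝ) 1, ρ t = ∫ x in (0:ℝ)..1, ρ x := by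
  set c := ∫ x in (0:ℝ)..1, ρ x
  have hρ2 : IntervalIntegrable (fun t => ρ t ^ 2) volume 0 1 := (hρ.pow 2).intervalIntegrable _ _
  have hρc : IntervalIntegrable (fun t => 2 * c * ρ t) volume 0 1 :=
    (continuous_const.mul hρ).intervalIntegrable _ _
  have hvar : ∫ t in (0:ℝ)..1, (ρ t - c) ^ 2 = (∫ t in (0:ℝ)..1, ρ t ^ 2) - c ^ 2 := by
    have hexp : ∀ t, (ρ t - c) ^ 2 = ρ t ^ 2 - (2 * c * ρ t - c ^ 2) := fun t => by ring
    simp only [hexp]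
    rw [intervalIntegral.integral_sub hρ2 (hρc.sub intervalIntegrable_const),
      intervalIntegral.integral_sub hρc intervalIntegrable_const, intervalIntegral.integral_const_mul]
    simp only [intervalIntegral.integral_const, sub_zero, smul_eq_mul, one_mul]
    ring
  by_contra! ⟨t, ht, hρt⟩
  have hpos : (∫ _ in (0:ℝ)..1, (0:ℝ)) < ∫ t in (0:ℝ)..1, (ρ t - c) ^ 2 :=
    integral_lt_integral_of_continuousOn_of_le_of_exists_lt zero_lt_one continuousOn_const
      ((hρ.sub continuous_const).pow 2).continuousOn (fun _ _ => sq_nonneg _)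
      ⟨t, ht, sq_pos_iff.2 (sub_ne_zero.2 hρt)⟩
  rw [intervalIntegral.integral_zero, hvar] at hpos
  linarith

lemma integral_sq_le_sq_integral_of_le (hρ : Continuous ρ) (hρpos : ∀ t, 0 < ρ t) {C : ℝ}
    (hC : 0 ≤ C)
    (h : ∫ t in (0:ℝ)..1, (ρ t ^ 2 - C) ≤
      ∫ t in (0:ℝ)..1, (∫ x in (0:ℝ)..1, ρ x) / ρ t * (ρ t ^ 2 - C)) :
    ∫ t in (0:ℝ)..1, ρ t ^ 2 ≤ (∫ t in (0:ℝ)..1, ρ t) ^ 2 := by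
  set c := ∫ x in (0:ℝ)..1, ρ x
  have hc : 0 < c := intervalIntegral_pos_of_pos_on (hρ.intervalIntegrable _ _)
    (fun t _ => hρpos t) zero_lt_one
  -- AM-GM: `c / ρ + ρ / c ≥ 2`
  have hamgm : ∀ t ∈ Icc (0:ℝ) 1, c / ρ t * (ρ t ^ 2 - C) ≤ (c + C / c) * ρ t - 2 * C := by
    intro t _
    have := hρpos t
    have : 0 ≤ C * (ρ t - c) ^ 2 / (ρ t * c) := by positivity
    rw [le_sub_iff_add_le, ← sub_nonneg]
    convert this using 1
    field_simp
    ring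
  have hρ2 : IntervalIntegrable (fun t => ρ t ^ 2) volume 0 1 := (hρ.pow 2).intervalIntegrable _ _
  have hρc : IntervalIntegrable (fun t => (c + C / c) * ρ t) volume 0 1 :=
    (continuous_const.mul hρ).intervalIntegrable _ _
  have hlhs : ∫ t in (0:ℝ)..1, (ρ t ^ 2 - C) = (∫ t in (0:ℝ)..1, ρ t ^ 2) - C := by
    simp [intervalIntegral.integral_sub hρ2 intervalIntegrable_const]
  have hrhs : ∫ t in (0:ℝ)..1, ((c + C / c) * ρ t - 2 * C) = c ^ 2 - C := by
    rw [intervalIntegral.integral_sub hρc intervalIntegrable_const,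
      intervalIntegral.integral_const_mul]
    field_simp
    simp
    ring
  have hupper : ∫ t in (0:ℝ)..1, c / ρ t * (ρ t ^ 2 - C)
      ≤ ∫ t in (0:ℝ)..1, ((c + C / c) * ρ t - 2 * C) :=
    integral_mono_on zero_le_one
      (((continuous_const.div hρ fun t => (hρpos t).ne').mul
        ((hρ.pow 2).sub continuous_const)).intervalIntegrable _ _)
      (hρc.sub intervalIntegrable_const) hamgm
  linarith

end UnitIntervalAverage

theorem minimizer_quasinormal_general (Q : ℝ × ℝ → ℝ × ℝ → ℝ)
    (hQcont : Continuous fun pq : (ℝ × ℝ) × (ℝ × ℝ) => Q pq.1 pq.2)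
    (hQhom : ∀ (p q : ℝ × ℝ) (l : ℝ), 0 < l → Q p (l • q) = l ^ 2 * Q p q)
    (𝒞 : Set (ℝ → ℝ × ℝ))
    (h𝒞reg : ∀ v ∈ 𝒞, ContDiff ℝ 1 v)
    (h𝒞inv : ∀ v ∈ 𝒞, ∀ (ε₀ : ℝ) (ξ : ℝ → ℝ → ℝ), IsAdmissibleVariation ε₀ ξ →
      ∀ ε ∈ Set.Ioo (-ε₀) ε₀, (fun t => v (ξ ε t)) ∈ 𝒞)
    (u : ℝ → ℝ × ℝ) (hu : u ∈ 𝒞)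
    (hmin : ∀ v ∈ 𝒞, varQ Q u ≤ varQ Q v) :
    ∃ h : ℝ, ∀ᵐ t : ℝ, t ∈ Set.Icc (0:ℝ) 1 → Q (u t) (deriv u t) = h := by
  have hu₁ : ContDiff ℝ 1 u := h𝒞reg u hu
  have hf : Continuous fun t => Q (u t) (deriv u t) :=
    hQcont.comp (hu₁.continuous.prodMk (hu₁.continuous_deriv le_rfl))
  obtain ⟨C, hC, ρ, hρ, hρ1, hfρ⟩ :=
    exists_continuous_one_le_sq_sub_eq zero_le_one hf.continuousOn
  have hρpos : ∀ t, 0 < ρ t := fun t => one_pos.trans_le (hρ1 t)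
  obtain ⟨φ, hφ, hφ0, hφ1⟩ := exists_hasDerivAt_integral_div_comp hρ one_pos hρ1
  set c := ∫ x in (0:ℝ)..1, ρ x
  have hw : Continuous fun s => c / ρ s := continuous_const.div hρ fun s => (hρpos s).ne'
  have hwpos : ∀ s, 0 < c / ρ s := fun s => div_pos
    (intervalIntegral_pos_of_pos_on (hρ.intervalIntegrable _ _) (fun t _ => hρpos t)
      zero_lt_one) (hρpos s)
  have hφC1 : ContDiff ℝ 1 φ := by
    refine contDiff_one_iff_deriv.2 ⟨fun y => (hφ y).differentiableAt, ?_⟩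
    rw [funext fun y => (hφ y).deriv]
    exact hw.comp (continuous_iff_continuousAt.2 fun y => (hφ y).continuousAt)
  have hle := hmin _ (comp_mem_of_forall_isAdmissibleVariation h𝒞inv hu hφC1
    (fun t _ => (hφ t).deriv ▸ hwpos _) hφ0 hφ1)
  have hI : uIcc (0:ℝ) 1 = Icc 0 1 := uIcc_of_le zero_le_one
  rw [varQ_comp_of_hasDerivAt hQcont hQhom hu₁ hw hwpos hφ, hφ0, hφ1, varQ,
    integral_congr fun t ht => hfρ t (hI ▸ ht),
    integral_congr fun t ht => congrArg _ (hfρ t (hI ▸ ht))] at hle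
  have hρc := eq_integral_of_integral_sq_le hρ (integral_sq_le_sq_integral_of_le hρ hρpos hC hle)
  exact ⟨c ^ 2 - C, Eventually.of_forall fun t ht => by rw [hfρ t ht, hρc t ht]⟩

/-- Minimizers of 2-homogeneous variational integrals are quasinormal: if `Q` is
continuous with `Q(p,q) ≤ m₂|q|²` and `Q(p,λq) = λ²Q(p,q)` for `λ > 0`, `𝒞` is a class
of loops invariant under admissible parameter variations, and `u ∈ 𝒞` minimizes
`𝒬(u) = ∫₀¹ Q(u,u̇)` over `𝒞`, then `Q(u(t),u̇(t))` is a.e. constant on `[0,1]`. -/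
theorem minimizer_quasinormal (Q : ℝ × ℝ → ℝ × ℝ → ℝ) (m₂ : ℝ)
    (hQcont : Continuous fun pq : (ℝ × ℝ) × (ℝ × ℝ) => Q pq.1 pq.2)
    (hQbound : ∀ p q : ℝ × ℝ, Q p q ≤ m₂ * nrm2 q ^ 2)
    (hQhom : ∀ (p q : ℝ × ℝ) (l : ℝ), 0 < l → Q p (l • q) = l ^ 2 * Q p q)
    (𝒞 : Set (ℝ → ℝ × ℝ))
    (h𝒞reg : ∀ v ∈ 𝒞, ContDiff ℝ 1 v)
    (h𝒞inv : ∀ v ∈ 𝒞, ∀ (ε₀ : ℝ) (ξ : ℝ → ℝ → ℝ), IsAdmissibleVariation ε₀ ξ →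
      ∀ ε ∈ Set.Ioo (-ε₀) ε₀, (fun t => v (ξ ε t)) ∈ 𝒞)
    (u : ℝ → ℝ × ℝ) (hu : u ∈ 𝒞)
    (hmin : ∀ v ∈ 𝒞, varQ Q u ≤ varQ Q v) :
    ∃ h : ℝ, ∀ᵐ t : ℝ, t ∈ Set.Icc (0:ℝ) 1 → Q (u t) (deriv u t) = h :=
  minimizer_quasinormal_general Q hQcont hQhom 𝒞 h𝒞reg h𝒞inv u hu hmin
end

section
/- Let $u \in C^{0,s}(\mathbb{R}^N)$ be bounded, $s\in(0,1)$, and let $E_s u(x,y) = \int_{\mathbb{R}^N} P_{N,s}(x-\xi,y)u(\xi)\,d\xi$ with $P_{N,s}(x,y) = p_{N,s}\,y^{2s}(y^2+|x|^2)^{-(N+2s)/2}$ the fractional Poisson kernel ($p_{N,s}$ chosen so the kernel has unit mass). Then $E_s u \in C^{0,s}(\overline{\mathbb{R}^{N+1}_+})$ with $\|E_s u\|_{C^{0,s}(\overline{\mathbb{R}^{N+1}_+})} \leq C\,\|u\|_{C^{0,s}(\mathbb{R}^N)}$, where $C$ depends only on $N$ and $s$. -/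
open MeasureTheory Real

/-- The normalizing constant `p_{N,s} = Γ((N+2s)/2) / (π^{N/2} Γ(s))` of the fractional
Poisson kernel, chosen so that the kernel has unit mass. -/
noncomputable def pConst (N : ℕ) (s : ℝ) : ℝ :=
  Real.Gamma (((N : ℝ) + 2 * s) / 2) / (π ^ ((N : ℝ) / 2) * Real.Gamma s)

/-- The fractional Poisson extension
`E_s u (x,y) = p_{N,s} ∫ y^{2s} (y² + |x-ξ|²)^{-(N+2s)/2} u(ξ) dξ` for `y > 0`,
extended by trace `u` at `y = 0`. -/
noncomputable def fracExt (N : ℕ) (s : ℝ) (u : EuclideanSpace ℝ (Fin N) → ℝ)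
    (x : EuclideanSpace ℝ (Fin N)) (y : ℝ) : ℝ :=
  if y = 0 then u x
  else pConst N s *
    ∫ ξ : EuclideanSpace ℝ (Fin N),
      y ^ (2 * s) / (y ^ 2 + ‖x - ξ‖ ^ 2) ^ (((N : ℝ) + 2 * s) / 2) * u ξ

/-!
The substitution `ξ = x + y • η` writes `E_s u (x, y) = ∫ ρ(η) u(x + y η) dη` for the fixed
density `ρ(η) = p_{N,s} (1 + |η|²)^{-(N+2s)/2}`, which has unit mass because
`(1 + |η|²)^{-β} = Γ(β)⁻¹ ∫₀^∞ t^{β-1} e^{-t} e^{-t|η|²} dt` is a superposition of Gaussians.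
Averaging against a probability density keeps the bound `M` and the Hölder bound in `x`; in `y`
it costs the factor `∫ |η|^s ρ(η) dη`, which is finite since `ρ` decays like `|η|^{-N-2s}`.
-/

open Set Module

section BracketIntegral

variable {V : Type*} [NormedAddCommGroup V] [InnerProductSpace ℝ V] [FiniteDimensional ℝ V]
  [MeasurableSpace V] [BorelSpace V]

lemma rpow_neg_eq_Gamma_inv_mul_integral {β r : ℝ} (hβ : 0 < β) (hr : 0 < r) :
    r ^ (-β) = (Gamma β)⁻¹ * ∫ t in Ioi 0, t ^ (β - 1) * exp (-(r * t)) := by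
  rw [integral_rpow_mul_exp_neg_mul_Ioi hβ hr, one_div, inv_rpow hr.le, ← rpow_neg hr.le,
    mul_comm, mul_inv_cancel_right₀ (Gamma_pos_of_pos hβ).ne']

lemma integral_gaussian_one_add_norm_sq {β t : ℝ} (ht : 0 < t) :
    ∫ v : V, t ^ (β - 1) * exp (-((1 + ‖v‖ ^ 2) * t)) =
      π ^ (finrank ℝ V / 2 : ℝ) * (exp (-t) * t ^ (β - finrank ℝ V / 2 - 1)) := by
  have hsplit : ∀ v : V, t ^ (β - 1) * exp (-((1 + ‖v‖ ^ 2) * t)) =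
      t ^ (β - 1) * exp (-t) * exp (-t * ‖v‖ ^ 2) := fun v => by
    rw [mul_assoc, ← exp_add]; ring_nf
  simp_rw [hsplit]
  rw [integral_const_mul, GaussianFourier.integral_rexp_neg_mul_sq_norm ht,
    div_rpow pi_pos.le ht.le, rpow_sub ht, rpow_sub ht, rpow_sub ht]
  field_simp

lemma integrable_gaussian_one_add_norm_sq {β t : ℝ} (ht : 0 < t) :
    Integrable fun v : V => t ^ (β - 1) * exp (-((1 + ‖v‖ ^ 2) * t)) :=
  .of_integral_ne_zero <| by rw [integral_gaussian_one_add_norm_sq ht]; positivity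

lemma integrable_uncurry_gaussian_one_add_norm_sq {β : ℝ} (hβ : (finrank ℝ V : ℝ) / 2 < β) :
    Integrable (Function.uncurry fun (v : V) (t : ℝ) => t ^ (β - 1) * exp (-((1 + ‖v‖ ^ 2) * t)))
      (volume.prod (volume.restrict (Ioi 0))) := by
  have hmeas : Measurable (Function.uncurry fun (v : V) (t : ℝ) =>
      t ^ (β - 1) * exp (-((1 + ‖v‖ ^ 2) * t))) := by
    simp only [Function.uncurry_def]; fun_prop
  refine (integrable_prod_iff' hmeas.aestronglyMeasurable).2 ⟨ae_restrict_of_forall_mem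
    measurableSet_Ioi fun t ht => integrable_gaussian_one_add_norm_sq ht, ?_⟩
  refine IntegrableOn.congr_fun
    ((GammaIntegral_convergent (by linarith : 0 < β - finrank ℝ V / 2)).const_mul
      (π ^ (finrank ℝ V / 2 : ℝ)))
    (fun t (ht : 0 < t) => ?_) measurableSet_Ioi
  have hnorm : ∀ v : V, ‖t ^ (β - 1) * exp (-((1 + ‖v‖ ^ 2) * t))‖ =
      t ^ (β - 1) * exp (-((1 + ‖v‖ ^ 2) * t)) := fun v => Real.norm_of_nonneg (by positivity)
  simp only [Function.uncurry_apply_pair, hnorm, integral_gaussian_one_add_norm_sq ht]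

theorem integral_one_add_norm_sq_rpow_neg {β : ℝ} (hβ : (finrank ℝ V : ℝ) / 2 < β) :
    ∫ v : V, (1 + ‖v‖ ^ 2) ^ (-β) =
      π ^ (finrank ℝ V / 2 : ℝ) * Gamma (β - finrank ℝ V / 2) / Gamma β := by
  set d : ℝ := (finrank ℝ V : ℝ)
  have hβ0 : 0 < β := by have : 0 ≤ d := Nat.cast_nonneg _; linarith
  calc ∫ v : V, (1 + ‖v‖ ^ 2) ^ (-β)
      = (Gamma β)⁻¹ * ∫ v : V, ∫ t in Ioi 0, t ^ (β - 1) * exp (-((1 + ‖v‖ ^ 2) * t)) := by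
        rw [← integral_const_mul]
        exact integral_congr_ae (.of_forall fun v =>
          rpow_neg_eq_Gamma_inv_mul_integral hβ0 (by positivity))
    _ = (Gamma β)⁻¹ * ∫ t in Ioi 0, π ^ (d / 2) * (exp (-t) * t ^ (β - d / 2 - 1)) := by
        rw [integral_integral_swap (integrable_uncurry_gaussian_one_add_norm_sq hβ)]
        congr 1
        exact setIntegral_congr_fun measurableSet_Ioi fun t ht =>
          integral_gaussian_one_add_norm_sq ht
    _ = π ^ (d / 2) * Gamma (β - d / 2) / Gamma β := by
        rw [integral_const_mul, ← Gamma_eq_integral (by linarith)]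
        ring

end BracketIntegral

section HaarMeasure

variable {E : Type*} [NormedAddCommGroup E] [NormedSpace ℝ E] [FiniteDimensional ℝ E]
  [MeasurableSpace E] [BorelSpace E] {μ : Measure E} [μ.IsAddHaarMeasure]

lemma integrable_norm_rpow_mul_one_add_norm_sq_rpow_neg {a r : ℝ} (ha : 0 ≤ a)
    (h : (finrank ℝ E : ℝ) + a < r) :
    Integrable (fun x : E => ‖x‖ ^ a * (1 + ‖x‖ ^ 2) ^ (-r / 2)) μ := by
  refine (integrable_rpow_neg_one_add_norm_sq (μ := μ) (r := r - a) (by linarith)).mono'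
    (by fun_prop) (.of_forall fun x => ?_)
  have hx : (0 : ℝ) < 1 + ‖x‖ ^ 2 := by positivity
  have hnorm : ‖x‖ ^ a ≤ (1 + ‖x‖ ^ 2) ^ (a / 2) := by
    calc ‖x‖ ^ a = (‖x‖ ^ 2) ^ (a / 2) := by
          rw [← rpow_natCast, ← rpow_mul (norm_nonneg _)]; ring_nf
      _ ≤ (1 + ‖x‖ ^ 2) ^ (a / 2) := by gcongr; linarith
  calc ‖‖x‖ ^ a * (1 + ‖x‖ ^ 2) ^ (-r / 2)‖ = ‖x‖ ^ a * (1 + ‖x‖ ^ 2) ^ (-r / 2) :=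
        Real.norm_of_nonneg (by positivity)
    _ ≤ (1 + ‖x‖ ^ 2) ^ (a / 2) * (1 + ‖x‖ ^ 2) ^ (-r / 2) := by gcongr
    _ = (1 + ‖x‖ ^ 2) ^ (-(r - a) / 2) := by rw [← rpow_add hx]; ring_nf

lemma integral_eq_pow_finrank_mul_integral_comp_add_smul (f : E → ℝ) (x : E) {y : ℝ}
    (hy : 0 < y) : ∫ ξ, f ξ ∂μ = y ^ finrank ℝ E * ∫ η, f (x + y • η) ∂μ := by
  rw [Measure.integral_comp_smul μ (fun ξ => f (x + ξ)), integral_add_left_eq_self,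
    abs_of_pos (by positivity), smul_eq_mul, mul_inv_cancel_left₀ (by positivity)]

end HaarMeasure

section DilatedAverage

variable {E : Type*} [NormedAddCommGroup E] [NormedSpace ℝ E] [MeasurableSpace E]
  {μ : Measure E} {ρ u : E → ℝ}

noncomputable def dilatedAverage (μ : Measure E) (ρ u : E → ℝ) (x : E) (y : ℝ) : ℝ :=
  ∫ η, ρ η * u (x + y • η) ∂μ

lemma dilatedAverage_zero (hρ1 : ∫ η, ρ η ∂μ = 1) (x : E) :
    dilatedAverage μ ρ u x 0 = u x := by
  simp [dilatedAverage, integral_mul_const, hρ1]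

lemma abs_dilatedAverage_le (hρ0 : ∀ η, 0 ≤ ρ η) (hρ : Integrable ρ μ)
    (hρ1 : ∫ η, ρ η ∂μ = 1) {M : ℝ} (hM : ∀ z, |u z| ≤ M) (x : E) (y : ℝ) :
    |dilatedAverage μ ρ u x y| ≤ M := by
  rw [dilatedAverage, ← Real.norm_eq_abs]
  refine (norm_integral_le_of_norm_le (hρ.mul_const M) (.of_forall fun η => ?_)).trans_eq ?_
  · rw [Real.norm_eq_abs, abs_mul, abs_of_nonneg (hρ0 η)]
    exact mul_le_mul_of_nonneg_left (hM _) (hρ0 η)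
  · rw [integral_mul_const, hρ1, one_mul]

variable [BorelSpace E]

lemma abs_dilatedAverage_sub_le_integral (hρ0 : ∀ η, 0 ≤ ρ η) (hρ : Integrable ρ μ)
    (hu : Measurable u) {M : ℝ} (hM : ∀ z, |u z| ≤ M)
    {g : E → ℝ} (hg : Integrable g μ) {x₁ x₂ : E} {y₁ y₂ : ℝ}
    (h : ∀ η, ρ η * |u (x₁ + y₁ • η) - u (x₂ + y₂ • η)| ≤ g η) :
    |dilatedAverage μ ρ u x₁ y₁ - dilatedAverage μ ρ u x₂ y₂| ≤ ∫ η, g η ∂μ := by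
  have hint : ∀ (x : E) (y : ℝ), Integrable (fun η => ρ η * u (x + y • η)) μ := fun x y =>
    have hxy : Continuous fun η : E => x + y • η := continuous_const.add (continuous_const_smul y)
    hρ.mul_bdd (hu.comp hxy.measurable).aestronglyMeasurable (.of_forall fun η => hM _)
  rw [dilatedAverage, dilatedAverage, ← integral_sub (hint x₁ y₁) (hint x₂ y₂),
    ← Real.norm_eq_abs]
  refine norm_integral_le_of_norm_le hg (.of_forall fun η => ?_)
  rw [← mul_sub, Real.norm_eq_abs, abs_mul, abs_of_nonneg (hρ0 η)]
  exact h η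

lemma abs_dilatedAverage_sub_left_le (hρ0 : ∀ η, 0 ≤ ρ η) (hρ : Integrable ρ μ)
    (hρ1 : ∫ η, ρ η ∂μ = 1) (hu : Measurable u) {M : ℝ} (hM : ∀ z, |u z| ≤ M)
    {A s : ℝ} (hA : ∀ z w, |u z - u w| ≤ A * ‖z - w‖ ^ s) (x₁ x₂ : E) (y : ℝ) :
    |dilatedAverage μ ρ u x₁ y - dilatedAverage μ ρ u x₂ y| ≤ A * ‖x₁ - x₂‖ ^ s := by
  calc _ ≤ ∫ η, ρ η * (A * ‖x₁ - x₂‖ ^ s) ∂μ :=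
        abs_dilatedAverage_sub_le_integral hρ0 hρ hu hM (hρ.mul_const _) fun η => by
          gcongr
          · exact hρ0 η
          · simpa using hA (x₁ + y • η) (x₂ + y • η)
    _ = A * ‖x₁ - x₂‖ ^ s := by rw [integral_mul_const, hρ1, one_mul]

lemma abs_dilatedAverage_sub_right_le (hρ0 : ∀ η, 0 ≤ ρ η) (hρ : Integrable ρ μ)
    (hu : Measurable u) {M : ℝ} (hM : ∀ z, |u z| ≤ M)
    {A s : ℝ} (hA : ∀ z w, |u z - u w| ≤ A * ‖z - w‖ ^ s)
    (hρs : Integrable (fun η => ‖η‖ ^ s * ρ η) μ) (x : E) (y₁ y₂ : ℝ) :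
    |dilatedAverage μ ρ u x y₁ - dilatedAverage μ ρ u x y₂| ≤
      A * (∫ η, ‖η‖ ^ s * ρ η ∂μ) * |y₁ - y₂| ^ s := by
  calc _ ≤ ∫ η, A * |y₁ - y₂| ^ s * (‖η‖ ^ s * ρ η) ∂μ :=
        abs_dilatedAverage_sub_le_integral hρ0 hρ hu hM (hρs.const_mul _) fun η => by
          have hd : x + y₁ • η - (x + y₂ • η) = (y₁ - y₂) • η := by rw [sub_smul]; abel
          have := hA (x + y₁ • η) (x + y₂ • η)
          rw [hd, norm_smul, Real.norm_eq_abs, mul_rpow (abs_nonneg _) (norm_nonneg _)] at this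
          calc ρ η * |u (x + y₁ • η) - u (x + y₂ • η)|
              ≤ ρ η * (A * (|y₁ - y₂| ^ s * ‖η‖ ^ s)) := mul_le_mul_of_nonneg_left this (hρ0 η)
            _ = _ := by ring
    _ = _ := by rw [integral_const_mul]; ring

lemma abs_dilatedAverage_sub_le (hρ0 : ∀ η, 0 ≤ ρ η) (hρ : Integrable ρ μ)
    (hρ1 : ∫ η, ρ η ∂μ = 1) (hu : Measurable u) {M : ℝ} (hM : ∀ z, |u z| ≤ M)
    {A s : ℝ} (hA0 : 0 ≤ A) (hs : 0 ≤ s) (hA : ∀ z w, |u z - u w| ≤ A * ‖z - w‖ ^ s)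
    (hρs : Integrable (fun η => ‖η‖ ^ s * ρ η) μ) (x₁ x₂ : E) (y₁ y₂ : ℝ) :
    |dilatedAverage μ ρ u x₁ y₁ - dilatedAverage μ ρ u x₂ y₂| ≤
      A * (1 + ∫ η, ‖η‖ ^ s * ρ η ∂μ) * √(‖x₁ - x₂‖ ^ 2 + (y₁ - y₂) ^ 2) ^ s := by
  set d := √(‖x₁ - x₂‖ ^ 2 + (y₁ - y₂) ^ 2)
  have hx : ‖x₁ - x₂‖ ^ s ≤ d ^ s := by
    gcongr
    exact (le_abs_self _).trans (Real.abs_le_sqrt (le_add_of_nonneg_right (sq_nonneg _)))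
  have hy : |y₁ - y₂| ^ s ≤ d ^ s := by
    gcongr
    exact Real.abs_le_sqrt (le_add_of_nonneg_left (sq_nonneg _))
  have hc : 0 ≤ ∫ η, ‖η‖ ^ s * ρ η ∂μ := integral_nonneg fun η => by positivity [hρ0 η]
  calc _ ≤ |dilatedAverage μ ρ u x₁ y₁ - dilatedAverage μ ρ u x₂ y₁| +
          |dilatedAverage μ ρ u x₂ y₁ - dilatedAverage μ ρ u x₂ y₂| := abs_sub_le _ _ _
    _ ≤ A * ‖x₁ - x₂‖ ^ s + A * (∫ η, ‖η‖ ^ s * ρ η ∂μ) * |y₁ - y₂| ^ s :=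
        add_le_add (abs_dilatedAverage_sub_left_le hρ0 hρ hρ1 hu hM hA x₁ x₂ y₁)
          (abs_dilatedAverage_sub_right_le hρ0 hρ hu hM hA hρs x₂ y₁ y₂)
    _ ≤ A * d ^ s + A * (∫ η, ‖η‖ ^ s * ρ η ∂μ) * d ^ s := by gcongr
    _ = _ := by ring

end DilatedAverage

section FractionalPoisson

variable {N : ℕ} {s : ℝ}

/-- The fractional Poisson kernel at height `1`, so that `P_{N,s}(x, y) = y⁻ᴺ ρ(x / y)`. -/
noncomputable def fracPoissonDensity (N : ℕ) (s : ℝ) (η : EuclideanSpace ℝ (Fin N)) : ℝ :=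
  pConst N s * (1 + ‖η‖ ^ 2) ^ (-((N : ℝ) + 2 * s) / 2)

lemma pConst_pos (hs : 0 < s) : 0 < pConst N s := by
  have := Gamma_pos_of_pos hs
  have := Gamma_pos_of_pos (by positivity : 0 < ((N : ℝ) + 2 * s) / 2)
  unfold pConst; positivity

lemma fracPoissonDensity_nonneg (hs : 0 < s) (η : EuclideanSpace ℝ (Fin N)) :
    0 ≤ fracPoissonDensity N s η := by
  have := pConst_pos (N := N) hs
  unfold fracPoissonDensity; positivity

lemma integrable_norm_rpow_mul_fracPoissonDensity {a : ℝ} (ha : 0 ≤ a) (has : a < 2 * s) :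
    Integrable fun η : EuclideanSpace ℝ (Fin N) => ‖η‖ ^ a * fracPoissonDensity N s η := by
  have := (integrable_norm_rpow_mul_one_add_norm_sq_rpow_neg (μ := volume) ha
    (by rw [finrank_euclideanSpace_fin]; linarith : _ < (N : ℝ) + 2 * s)).const_mul (pConst N s)
  refine this.congr (.of_forall fun η => ?_)
  simp only [fracPoissonDensity]; ring

lemma integrable_fracPoissonDensity (hs : 0 < s) :
    Integrable (fracPoissonDensity N s) := by
  simpa using integrable_norm_rpow_mul_fracPoissonDensity (N := N) le_rfl (by linarith)

lemma integral_fracPoissonDensity (hs : 0 < s) :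
    ∫ η : EuclideanSpace ℝ (Fin N), fracPoissonDensity N s η = 1 := by
  have hβ : (finrank ℝ (EuclideanSpace ℝ (Fin N)) : ℝ) / 2 < ((N : ℝ) + 2 * s) / 2 := by
    rw [finrank_euclideanSpace_fin]; linarith
  have := Gamma_pos_of_pos hs
  have := Gamma_pos_of_pos (by positivity : 0 < ((N : ℝ) + 2 * s) / 2)
  simp only [fracPoissonDensity, integral_const_mul, neg_div]
  rw [integral_one_add_norm_sq_rpow_neg hβ, finrank_euclideanSpace_fin, pConst]
  field_simp
  ring_nf

lemma pow_mul_fracPoisson_scaling {y : ℝ} (hy : 0 < y) (r : ℝ) :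
    y ^ N * (y ^ (2 * s) / (y ^ 2 + (y * r) ^ 2) ^ (((N : ℝ) + 2 * s) / 2)) =
      (1 + r ^ 2) ^ (-((N : ℝ) + 2 * s) / 2) := by
  have hr : (0 : ℝ) < 1 + r ^ 2 := by positivity
  have hy2 : (y ^ 2) ^ (((N : ℝ) + 2 * s) / 2) = y ^ N * y ^ (2 * s) := by
    rw [← rpow_natCast y 2, ← rpow_mul hy.le, ← rpow_natCast y N, ← rpow_add hy]
    ring_nf
  rw [show y ^ 2 + (y * r) ^ 2 = y ^ 2 * (1 + r ^ 2) by ring, mul_rpow (by positivity) hr.le,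
    hy2, neg_div, rpow_neg hr.le]
  field_simp

lemma fracExt_eq_dilatedAverage (hs : 0 < s) (u : EuclideanSpace ℝ (Fin N) → ℝ)
    (x : EuclideanSpace ℝ (Fin N)) {y : ℝ} (hy : 0 ≤ y) :
    fracExt N s u x y = dilatedAverage volume (fracPoissonDensity N s) u x y := by
  rcases hy.eq_or_lt with rfl | hy
  · rw [fracExt, if_pos rfl, dilatedAverage_zero (integral_fracPoissonDensity hs)]
  rw [fracExt, if_neg hy.ne', integral_eq_pow_finrank_mul_integral_comp_add_smul _ x hy,
    finrank_euclideanSpace_fin, dilatedAverage, ← integral_const_mul, ← integral_const_mul]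
  refine integral_congr_ae (.of_forall fun η => ?_)
  have hnorm : ‖x - (x + y • η)‖ = y * ‖η‖ := by
    rw [sub_add_cancel_left, norm_neg, norm_smul, Real.norm_of_nonneg hy.le]
  simp only [fracPoissonDensity, hnorm, ← pow_mul_fracPoisson_scaling hy]
  ring

end FractionalPoisson

theorem fracExt_holder_general (N : ℕ) (s : ℝ) (hs : s ∈ Set.Ioo (0:ℝ) 1) :
    ∃ C > 0, ∀ (u : EuclideanSpace ℝ (Fin N) → ℝ) (M A : ℝ),
      0 ≤ M → 0 ≤ A → Measurable u →
      (∀ x, |u x| ≤ M) →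
      (∀ x y : EuclideanSpace ℝ (Fin N), |u x - u y| ≤ A * ‖x - y‖ ^ s) →
      (∀ (x : EuclideanSpace ℝ (Fin N)) (y : ℝ), 0 ≤ y →
        |fracExt N s u x y| ≤ C * (M + A)) ∧
      (∀ (x₁ x₂ : EuclideanSpace ℝ (Fin N)) (y₁ y₂ : ℝ), 0 ≤ y₁ → 0 ≤ y₂ →
        |fracExt N s u x₁ y₁ - fracExt N s u x₂ y₂| ≤
          C * (M + A) * Real.sqrt (‖x₁ - x₂‖ ^ 2 + (y₁ - y₂) ^ 2) ^ s) := by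
  obtain ⟨hs0, -⟩ := hs
  set ρ := fracPoissonDensity N s
  have hρ0 := fracPoissonDensity_nonneg (N := N) hs0
  have hρ := integrable_fracPoissonDensity (N := N) hs0
  have hρ1 := integral_fracPoissonDensity (N := N) hs0
  have hρs := integrable_norm_rpow_mul_fracPoissonDensity (N := N) (s := s) hs0.le (by linarith)
  have hc : 0 ≤ ∫ η, ‖η‖ ^ s * ρ η := integral_nonneg fun η => by positivity [hρ0 η]
  refine ⟨1 + ∫ η, ‖η‖ ^ s * ρ η, by positivity, fun u M A hM0 hA0 hu hM hA => ⟨?_, ?_⟩⟩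
  · intro x y hy
    rw [fracExt_eq_dilatedAverage hs0 u x hy]
    calc _ ≤ M := abs_dilatedAverage_le hρ0 hρ hρ1 hM x y
      _ ≤ _ := by nlinarith
  · intro x₁ x₂ y₁ y₂ hy₁ hy₂
    rw [fracExt_eq_dilatedAverage hs0 u x₁ hy₁, fracExt_eq_dilatedAverage hs0 u x₂ hy₂]
    calc _ ≤ A * (1 + ∫ η, ‖η‖ ^ s * ρ η) * √(‖x₁ - x₂‖ ^ 2 + (y₁ - y₂) ^ 2) ^ s :=
          abs_dilatedAverage_sub_le hρ0 hρ hρ1 hu hM hA0 hs0.le hA hρs x₁ x₂ y₁ y₂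
      _ ≤ _ := by rw [mul_comm A]; gcongr; linarith

/-- Hölder regularity of the fractional Poisson extension: there is `C = C(N,s) > 0` such
that for every bounded `u ∈ C^{0,s}(ℝ^N)` (say `|u| ≤ M` and `[u]_{C^{0,s}} ≤ A`), the
extension `E_s u` is `C^{0,s}` on the closed half space, with
`‖E_s u‖_{C^{0,s}(\overline{ℝ^{N+1}_+})} ≤ C ‖u‖_{C^{0,s}(ℝ^N)}`. -/
theorem fracExt_holder (N : ℕ) (hN : 1 ≤ N) (s : ℝ) (hs : s ∈ Set.Ioo (0:ℝ) 1) :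
    ∃ C > 0, ∀ (u : EuclideanSpace ℝ (Fin N) → ℝ) (M A : ℝ),
      0 ≤ M → 0 ≤ A → Measurable u →
      (∀ x, |u x| ≤ M) →
      (∀ x y : EuclideanSpace ℝ (Fin N), |u x - u y| ≤ A * ‖x - y‖ ^ s) →
      (∀ (x : EuclideanSpace ℝ (Fin N)) (y : ℝ), 0 ≤ y →
        |fracExt N s u x y| ≤ C * (M + A)) ∧
      (∀ (x₁ x₂ : EuclideanSpace ℝ (Fin N)) (y₁ y₂ : ℝ), 0 ≤ y₁ → 0 ≤ y₂ →
        |fracExt N s u x₁ y₁ - fracExt N s u x₂ y₂| ≤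
          C * (M + A) * Real.sqrt (‖x₁ - x₂‖ ^ 2 + (y₁ - y₂) ^ 2) ^ s) :=
  fracExt_holder_general N s hs
end
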